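/- Suppose Assumptions TI, CONT and M0 hold, P(G=0, R=0) > 0, and μ₁₀(U₀) and μ₁₀(U₁) are P-integrable. Then the mean untreated outcome of control attritors is identified: E[Y₁(0) | G=0, R=0] = E[F_{Y₁|G=0,R=1}^{-1}(F_{Y₀|G=0,R=1}(Y₀)) | G=0, R=0]. (Key step in the proof of Proposition 2.) -/

import Mathlib

open MeasureTheory ProbabilityTheory

/-- Conditional CDF of `X` given the event `A`: `F_{X|A}(y) = P(X ≤ y | A)`. -/
noncomputable def cCDF {Ω : Type*} [MeasurableSpace Ω] (P : Measure Ω) (A : Set Ω)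
    (X : Ω → ℝ) (y : ℝ) : ℝ :=
  ((P[|A]) {ω | X ω ≤ y}).toReal

/-- Generalized inverse `F⁻¹(q) = inf {y ∈ ℝ : F(y) ≥ q}`. -/
noncomputable def ginv (F : ℝ → ℝ) (q : ℝ) : ℝ :=
  sInf {y : ℝ | q ≤ F y}

/-- Conditional expectation of `X` given the event `A`: `E[X·1_A]/P(A)`. -/
noncomputable def cExp {Ω : Type*} [MeasurableSpace Ω] (P : Measure Ω) (A : Set Ω)
    (X : Ω → ℝ) : ℝ :=
  (∫ ω in A, X ω ∂P) / (P A).toReal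

/-- Conditional probability of `B` given `A`: `P(B|A) = P(B ∩ A)/P(A)`. -/
noncomputable def condProb {Ω : Type*} [MeasurableSpace Ω] (P : Measure Ω)
    (A B : Set Ω) : ℝ :=
  (P (B ∩ A)).toReal / (P A).toReal

/-!
Time invariance in the cell `G = 0, R = 1` gives `U₀` and `U₁` a common conditional CDF `Φ`
there, and strict monotonicity of `μ₀₀`, `μ₁₀` turns this into `F_{Y₀}(μ₀₀ u) = Φ u` and
`F_{Y₁}(μ₁₀ u) = Φ u` on that cell. Since `Φ` is strictly increasing and `μ₁₀` continuous, the
generalized inverse of `F_{Y₁}` undoes this, so the integrand on the right is `μ₁₀(U₀)` pointwise;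
time invariance in the cell `G = 0, R = 0` then equates the conditional means of `μ₁₀(U₀)` and
`μ₁₀(U₁)`.
-/

section

variable {Ω : Type*} [MeasurableSpace Ω] {P : Measure Ω} {A : Set Ω}

lemma cCDF_comp_strictMono {f : ℝ → ℝ} (hf : StrictMono f) (X : Ω → ℝ) (x : ℝ) :
    cCDF P A (fun ω => f (X ω)) (f x) = cCDF P A X x := by
  simp only [cCDF, hf.le_iff_le]

lemma cCDF_congr (hA : MeasurableSet A) {X Y : Ω → ℝ} (h : Set.EqOn X Y A) :
    cCDF P A X = cCDF P A Y := by
  funext y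
  refine congrArg ENNReal.toReal (measure_congr ?_)
  filter_upwards [ae_cond_mem hA] with ω hω
  change (X ω ≤ y) = (Y ω ≤ y)
  rw [h hω]

lemma cCDF_eq_of_map_eq {X Y : Ω → ℝ} (hX : Measurable X) (hY : Measurable Y)
    (h : (P[|A]).map X = (P[|A]).map Y) : cCDF P A X = cCDF P A Y := by
  funext y
  have := congrArg (fun ν : Measure ℝ => ν (Set.Iic y)) h
  simp only [Measure.map_apply hX measurableSet_Iic, Measure.map_apply hY measurableSet_Iic]
    at this
  exact congrArg ENNReal.toReal this

lemma monotone_cCDF [IsFiniteMeasure P] (hA : P A ≠ 0) (X : Ω → ℝ) :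
    Monotone (cCDF P A X) := by
  have := cond_isProbabilityMeasure (μ := P) hA
  exact fun _ _ hxy => ENNReal.toReal_mono (measure_ne_top _ _)
    (measure_mono fun _ hω => le_trans hω hxy)

lemma cExp_eq_integral_cond (X : Ω → ℝ) : cExp P A X = ∫ ω, X ω ∂(P[|A]) := by
  simp only [cExp, ProbabilityTheory.cond, integral_smul_measure, ENNReal.toReal_inv,
    smul_eq_mul, div_eq_inv_mul]

lemma cExp_comp_eq_of_map_eq {X Y : Ω → ℝ} (hX : Measurable X) (hY : Measurable Y)
    (h : (P[|A]).map X = (P[|A]).map Y) {f : ℝ → ℝ} (hf : Measurable f) :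
    cExp P A (fun ω => f (X ω)) = cExp P A (fun ω => f (Y ω)) := by
  rw [cExp_eq_integral_cond, cExp_eq_integral_cond,
    ← integral_map hX.aemeasurable hf.aestronglyMeasurable,
    ← integral_map hY.aemeasurable hf.aestronglyMeasurable, h]

lemma ginv_apply_eq_of_comp_eq {Φ H f : ℝ → ℝ} (hΦ : StrictMono Φ) (hH : Monotone H)
    (hf : Continuous f) (hHf : ∀ v, H (f v) = Φ v) (u : ℝ) : ginv H (Φ u) = f u := by
  have hmem : f u ∈ {y | Φ u ≤ H y} := (hHf u).ge
  have hlower : f u ∈ lowerBounds {y | Φ u ≤ H y} := by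
    intro y hy
    by_contra! hyu
    obtain ⟨w, hyw, hwu⟩ : ∃ w, y < f w ∧ w < u :=
      (((hf.tendsto u).mono_left nhdsWithin_le_nhds).eventually (eventually_gt_nhds hyu)
        |>.and self_mem_nhdsWithin).exists (f := nhdsWithin u (Set.Iio u))
    have : H y < Φ u := (hH hyw.le).trans_lt ((hHf w).trans_lt (hΦ hwu))
    exact (hy.trans_lt this).false
  exact le_antisymm (csInf_le ⟨f u, hlower⟩ hmem) (le_csInf ⟨_, hmem⟩ hlower)

end

theorem cic_prop2_control_attritors_general {Ω : Type*} [MeasurableSpace Ω]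
    (P : Measure Ω) [IsProbabilityMeasure P]
    (U₀ U₁ : Ω → ℝ) (G R : Ω → Bool)
    (hU₀ : Measurable U₀) (hU₁ : Measurable U₁)
    (hG : Measurable G) (hR : Measurable R)
    (μ00 μ10 μ11 : ℝ → ℝ)
    -- observed outcomes
    (Y0 Y1 : Ω → ℝ)
    (hY0 : ∀ ω, Y0 ω = μ00 (U₀ ω))
    (hY1 : ∀ ω, Y1 ω = if G ω = true then μ11 (U₁ ω) else μ10 (U₁ ω))
    -- Assumption TI (time invariance)
    (hTI : ∀ g r : Bool, 0 < P {ω | G ω = g ∧ R ω = r} →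
      (P[|{ω | G ω = g ∧ R ω = r}]).map U₀ = (P[|{ω | G ω = g ∧ R ω = r}]).map U₁)
    -- Assumption CONT
    (hCONT : ∀ g : Bool, 0 < P {ω | G ω = g ∧ R ω = true} ∧
      Continuous (cCDF P {ω | G ω = g ∧ R ω = true} U₁) ∧
      StrictMono (cCDF P {ω | G ω = g ∧ R ω = true} U₁))
    -- Assumption M0
    (hμ00 : StrictMono μ00)
    (hμ10c : Continuous μ10) (hμ10 : StrictMono μ10)
    -- positive probability of control attritors
    (hpos : 0 < P {ω | G ω = false ∧ R ω = false}) :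
    cExp P {ω | G ω = false ∧ R ω = false} (fun ω => μ10 (U₁ ω))
      = cExp P {ω | G ω = false ∧ R ω = false}
          (fun ω => ginv (cCDF P {ω | G ω = false ∧ R ω = true} Y1)
            (cCDF P {ω | G ω = false ∧ R ω = true} Y0 (Y0 ω))) := by
  obtain rfl : Y0 = fun ω => μ00 (U₀ ω) := funext hY0
  set B : Set Ω := {ω | G ω = false ∧ R ω = true}
  have hB : MeasurableSet B :=
    (hG (measurableSet_singleton false)).inter (hR (measurableSet_singleton true))
  obtain ⟨hBpos, -, hΦ⟩ := hCONT false
  have hY1B : cCDF P B Y1 = cCDF P B (fun ω => μ10 (U₁ ω)) :=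
    cCDF_congr hB fun ω hω => by simp [hY1, hω.1]
  have hU : cCDF P B U₀ = cCDF P B U₁ := cCDF_eq_of_map_eq hU₀ hU₁ (hTI false true hBpos)
  have hquantile : ∀ ω, ginv (cCDF P B Y1) (cCDF P B (fun ω => μ00 (U₀ ω)) (μ00 (U₀ ω)))
      = μ10 (U₀ ω) := fun ω => by
    rw [cCDF_comp_strictMono hμ00, hU, hY1B]
    exact ginv_apply_eq_of_comp_eq hΦ (monotone_cCDF hBpos.ne' _) hμ10c
      (cCDF_comp_strictMono hμ10 U₁) _
  simp only [hquantile]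
  exact cExp_comp_eq_of_map_eq hU₁ hU₀ (hTI false false hpos).symm hμ10c.measurable

/-- **Key step in Proposition 2 (control attritors)**: under Assumptions TI, CONT and M0,
with `P(G=0, R=0) > 0` and integrability of `μ₁₀(U₀)` and `μ₁₀(U₁)`, the mean untreated
outcome of control attritors is identified:
`E[Y₁(0) | G=0, R=0] = E[F_{Y₁|G=0,R=1}⁻¹(F_{Y₀|G=0,R=1}(Y₀)) | G=0, R=0]`. -/
theorem cic_prop2_control_attritors {Ω : Type*} [MeasurableSpace Ω]
    (P : Measure Ω) [IsProbabilityMeasure P]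
    (U₀ U₁ : Ω → ℝ) (G R : Ω → Bool)
    (hU₀ : Measurable U₀) (hU₁ : Measurable U₁)
    (hG : Measurable G) (hR : Measurable R)
    (μ00 μ10 μ11 : ℝ → ℝ)
    -- observed outcomes
    (Y0 Y1 : Ω → ℝ)
    (hY0 : ∀ ω, Y0 ω = μ00 (U₀ ω))
    (hY1 : ∀ ω, Y1 ω = if G ω = true then μ11 (U₁ ω) else μ10 (U₁ ω))
    -- Assumption TI (time invariance)
    (hTI : ∀ g r : Bool, 0 < P {ω | G ω = g ∧ R ω = r} →
      (P[|{ω | G ω = g ∧ R ω = r}]).map U₀ = (P[|{ω | G ω = g ∧ R ω = r}]).map U₁)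
    -- Assumption CONT
    (hCONT : ∀ g : Bool, 0 < P {ω | G ω = g ∧ R ω = true} ∧
      Continuous (cCDF P {ω | G ω = g ∧ R ω = true} U₁) ∧
      StrictMono (cCDF P {ω | G ω = g ∧ R ω = true} U₁))
    -- Assumption M0
    (hμ00c : Continuous μ00) (hμ00 : StrictMono μ00)
    (hμ10c : Continuous μ10) (hμ10 : StrictMono μ10)
    -- positive probability of control attritors
    (hpos : 0 < P {ω | G ω = false ∧ R ω = false})
    -- integrability
    (hI1 : Integrable (fun ω => μ10 (U₀ ω)) P)
    (hI2 : Integrable (fun ω => μ10 (U₁ ω)) P) :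
    cExp P {ω | G ω = false ∧ R ω = false} (fun ω => μ10 (U₁ ω))
      = cExp P {ω | G ω = false ∧ R ω = false}
          (fun ω => ginv (cCDF P {ω | G ω = false ∧ R ω = true} Y1)
            (cCDF P {ω | G ω = false ∧ R ω = true} Y0 (Y0 ω))) :=
  cic_prop2_control_attritors_general P U₀ U₁ G R hU₀ hU₁ hG hR μ00 μ10 μ11 Y0 Y1 hY0 hY1 hTI hCONT
    hμ00 hμ10c hμ10 hpos
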